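/- arXiv:2509.19909 — 2 statements merged into one kernel-verified Lean document; each statement's English description precedes it below -/
import Mathlib

section
/- Let A > 0 and T > 0. The equation z = A·(1 - e^{-z·T}) has a strictly positive real root if and only if A·T > 1; moreover, when A·T > 1 the strictly positive root is unique. -/
/-!
The map `φ z = A * (1 - exp (-z * T))` is strictly concave with `φ 0 = 0` and `φ' 0 = A * T`.
Since `1 - exp (-x) < x` for `x ≠ 0`, a positive fixed point of `φ` forces `A * T > 1`.
Conversely, if `A * T > 1` then `φ z > z` for small `z > 0` while `φ A < A`, so the intermediate
value theorem produces a fixed point; by strict concavity `φ` has at most one fixed point beyond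
the fixed point `0`.
-/

open Real Set Function

theorem one_sub_exp_neg_lt {x : ℝ} (hx : x ≠ 0) : 1 - exp (-x) < x := by
  linarith [add_one_lt_exp (neg_ne_zero.2 hx)]

theorem div_one_add_le_one_sub_exp_neg {x : ℝ} (hx : 0 ≤ x) : x / (1 + x) ≤ 1 - exp (-x) := by
  have hx1 : 0 < 1 + x := by linarith
  have : exp (-x) ≤ (1 + x)⁻¹ := by
    rw [exp_neg]
    exact inv_anti₀ hx1 (by linarith [add_one_le_exp x])
  calc x / (1 + x) = 1 - (1 + x)⁻¹ := by field_simp; ring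
    _ ≤ 1 - exp (-x) := by linarith

/-- Slopes of secants through three fixed points would all be `1`, contradicting strict concavity. -/
theorem StrictConcaveOn.eq_of_isFixedPt {𝕜 : Type*} [Field 𝕜] [LinearOrder 𝕜]
    [IsStrictOrderedRing 𝕜] {s : Set 𝕜} {f : 𝕜 → 𝕜} (hf : StrictConcaveOn 𝕜 s f) {a x y : 𝕜}
    (ha : a ∈ s) (hx : x ∈ s) (hy : y ∈ s) (hax : a < x) (hay : a < y) (hfa : IsFixedPt f a)
    (hfx : IsFixedPt f x) (hfy : IsFixedPt f y) : x = y := by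
  have no_three {u v : 𝕜} (hv : v ∈ s) (hau : a < u) (huv : u < v) (hfu : IsFixedPt f u)
      (hfv : IsFixedPt f v) : False := by
    have := hf.slope_anti_adjacent ha hv hau huv
    rw [hfa.eq, hfu.eq, hfv.eq, div_self (sub_ne_zero.2 huv.ne'),
      div_self (sub_ne_zero.2 hau.ne')] at this
    exact lt_irrefl 1 this
  rcases lt_trichotomy x y with h | h | h
  · exact (no_three hy hax h hfx hfy).elim
  · exact h
  · exact (no_three hx hay h hfy hfx).elim

theorem strictConcaveOn_mul_one_sub_exp {A T : ℝ} (hA : 0 < A) (hT : T ≠ 0) :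
    StrictConcaveOn ℝ univ fun z ↦ A * (1 - exp (-z * T)) := by
  refine ⟨convex_univ, fun x _ y _ hxy a b ha hb hab ↦ ?_⟩
  have hexp := strictConvexOn_exp.2 (mem_univ (-x * T)) (mem_univ (-y * T))
    (by simpa [hT] using hxy) ha hb hab
  simp only [smul_eq_mul] at hexp ⊢
  have harg : -(a * x + b * y) * T = a * (-x * T) + b * (-y * T) := by ring
  rw [harg]
  nlinarith

theorem one_lt_mul_of_root {A T z : ℝ} (hT : 0 < T) (hz : 0 < z)
    (hroot : z = A * (1 - exp (-z * T))) : 1 < A * T := by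
  have hzT : 0 < z * T := mul_pos hz hT
  have hu : 0 < 1 - exp (-z * T) := by
    rw [sub_pos, exp_lt_one_iff]; linarith
  have hA : 0 < A := pos_of_mul_pos_left (hroot ▸ hz) hu.le
  have := one_sub_exp_neg_lt hzT.ne'
  rw [← neg_mul] at this
  nlinarith

theorem exists_root_of_one_lt_mul {A T : ℝ} (hT : 0 < T) (hAT : 1 < A * T) :
    ∃ z, 0 < z ∧ z = A * (1 - exp (-z * T)) := by
  have hA : 0 < A := pos_of_mul_pos_left (by linarith) hT.le
  -- `1 - exp (-x) ≥ x / (1 + x)` gives `φ ε > ε` as soon as `1 + ε * T < A * T`.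
  set ε := (A * T - 1) / (2 * T)
  have hε : 0 < ε := div_pos (by linarith) (by linarith)
  have hεT : ε * T = (A * T - 1) / 2 := by simp only [ε]; field_simp
  have hεA : ε ≤ A := by nlinarith
  have hlow : ε < A * (1 - exp (-ε * T)) := by
    have := div_one_add_le_one_sub_exp_neg (mul_pos hε hT).le
    rw [← neg_mul] at this
    have hgain : ε < A * (ε * T / (1 + ε * T)) := by
      rw [mul_div_assoc', lt_div_iff₀ (by positivity)]
      nlinarith
    exact hgain.trans_le (mul_le_mul_of_nonneg_left this hA.le)
  have hhigh : A * (1 - exp (-A * T)) < A := by nlinarith [exp_pos (-A * T)]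
  obtain ⟨z, hz, hzroot⟩ := intermediate_value_Icc' hεA
    (f := fun z ↦ A * (1 - exp (-z * T)) - z) (by fun_prop)
    (show (0 : ℝ) ∈ Icc _ _ from ⟨by linarith, by linarith⟩)
  exact ⟨z, hε.trans_le hz.1, by simp only at hzroot; linarith⟩

/-- The characteristic equation `z = A·(1 - e^{-z·T})` of the AK vintage capital model
has a strictly positive real root iff `A·T > 1`, in which case this root is unique. -/
theorem stmt_1 (A T : ℝ) (hA : 0 < A) (hT : 0 < T) :
    ((∃ z : ℝ, 0 < z ∧ z = A * (1 - Real.exp (-z * T))) ↔ 1 < A * T) ∧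
    (1 < A * T → ∃! z : ℝ, 0 < z ∧ z = A * (1 - Real.exp (-z * T))) := by
  refine ⟨⟨fun ⟨z, hz, hroot⟩ ↦ one_lt_mul_of_root hT hz hroot, exists_root_of_one_lt_mul hT⟩,
    fun hAT ↦ ?_⟩
  obtain ⟨z, hz, hroot⟩ := exists_root_of_one_lt_mul hT hAT
  refine ⟨z, ⟨hz, hroot⟩, fun y ⟨hy, hyroot⟩ ↦ ?_⟩
  have hfix0 : IsFixedPt (fun z ↦ A * (1 - exp (-z * T))) 0 := by simp [IsFixedPt]
  exact (strictConcaveOn_mul_one_sub_exp hA hT.ne').eq_of_isFixedPt (mem_univ 0) (mem_univ y)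
    (mem_univ z) hy hz hfix0 hyroot.symm hroot.symm
end

section
/- Let ρ > 0, let g : [0,∞) → ℝ be measurable with s ↦ e^{-ρs}·g(s) integrable on [0,∞), and let φ : [0,∞) → ℝ be a differentiable function such that for all r ≥ 0: (d/dr)(e^{-ρr}·φ(r)) ≤ -e^{-ρr}·g(r), and limsup_{r→∞} e^{-ρr}·φ(r) ≥ 0. Then φ(0) ≥ ∫_0^∞ e^{-ρs}·g(s) ds. -/
open MeasureTheory Set Filter Topology

/-!
Set `F r = e^{-ρr} φ(r)` and `h s = e^{-ρs} g(s)`. The differential inequality `F' ≤ -h`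
integrates to `∫_0^b h ≤ F 0 - F b` for every `b ≥ 0`. As `b → ∞` the left side tends to
`∫_0^∞ h`, so `limsup F ≤ F 0 - ∫_0^∞ h`, and transversality `limsup F ≥ 0` gives the claim.
-/

theorem intervalIntegral_le_sub_of_exists_hasDerivAt_le_neg {F h : ℝ → ℝ} {a b : ℝ}
    (hab : a ≤ b) (hF : ∀ x ∈ Icc a b, ∃ d, HasDerivAt F d x ∧ d ≤ -h x)
    (hh : IntegrableOn h (Icc a b)) :
    ∫ x in a..b, h x ≤ F a - F b := by
  choose! D hD using hF
  have hcont : ContinuousOn (-F) (Icc a b) := fun x hx =>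
    (hD x hx).1.continuousAt.neg.continuousWithinAt
  have key := intervalIntegral.integral_le_sub_of_hasDeriv_right_of_le hab hcont
    (fun x hx => (hD x (Ioo_subset_Icc_self hx)).1.neg.hasDerivWithinAt) hh
    (fun x hx => le_neg_of_le_neg (hD x (Ioo_subset_Icc_self hx)).2)
  simpa [neg_add_eq_sub] using key

theorem le_of_le_limsup_of_eventuallyLE_of_tendsto {α : Type*} {l : Filter α} [l.NeBot]
    {u v : α → ℝ} {a c : ℝ} (hu : (a : EReal) ≤ limsup (fun x => (u x : EReal)) l)
    (huv : u ≤ᶠ[l] v) (hv : Tendsto v l (𝓝 c)) : a ≤ c := by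
  have hv' : Tendsto (fun x => (v x : EReal)) l (𝓝 (c : EReal)) :=
    (continuous_coe_real_ereal.tendsto c).comp hv
  have : limsup (fun x => (u x : EReal)) l ≤ c := by
    rw [← hv'.limsup_eq]
    exact limsup_le_limsup (huv.mono fun x hx => EReal.coe_le_coe_iff.mpr hx)
  exact EReal.coe_le_coe_iff.mp (hu.trans this)

theorem stmt_15_general (ρ : ℝ) (g φ : ℝ → ℝ)
    (hg : IntegrableOn (fun s => Real.exp (-ρ * s) * g s) (Ici 0))
    (hφ : ∀ r ≥ (0:ℝ), ∃ d : ℝ,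
      HasDerivAt (fun r => Real.exp (-ρ * r) * φ r) d r ∧
      d ≤ -(Real.exp (-ρ * r) * g r))
    (htrans : (0 : EReal) ≤
      Filter.limsup (fun r => ((Real.exp (-ρ * r) * φ r : ℝ) : EReal)) atTop) :
    φ 0 ≥ ∫ s in Ici 0, Real.exp (-ρ * s) * g s := by
  set F : ℝ → ℝ := fun r => Real.exp (-ρ * r) * φ r
  set h : ℝ → ℝ := fun s => Real.exp (-ρ * s) * g s
  have hbound : ∀ b ≥ (0:ℝ), ∫ s in (0:ℝ)..b, h s ≤ F 0 - F b := fun b hb =>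
    intervalIntegral_le_sub_of_exists_hasDerivAt_le_neg hb (fun x hx => hφ x hx.1)
      (hg.mono_set Icc_subset_Ici_self)
  have htend : Tendsto (fun b => ∫ s in (0:ℝ)..b, h s) atTop (𝓝 (∫ s in Ici 0, h s)) := by
    rw [integral_Ici_eq_integral_Ioi]
    exact intervalIntegral_tendsto_integral_Ioi 0 (hg.mono_set Ioi_subset_Ici_self) tendsto_id
  have hF_le : ∀ᶠ b in atTop, F b ≤ F 0 - ∫ s in (0:ℝ)..b, h s :=
    (eventually_ge_atTop 0).mono fun b hb => by linarith [hbound b hb]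
  have hnonneg : 0 ≤ F 0 - ∫ s in Ici 0, h s :=
    le_of_le_limsup_of_eventuallyLE_of_tendsto (by exact_mod_cast htrans) hF_le
      (tendsto_const_nhds.sub htend)
  have hF0 : F 0 = φ 0 := by simp [F]
  linarith

/-- Scalar core of the infinite-horizon verification theorem (supersolution side):
if `(d/dr)(e^{-ρr}φ(r)) ≤ -e^{-ρr}g(r)` for all `r ≥ 0` and
`limsup_{r→∞} e^{-ρr}φ(r) ≥ 0`, then `φ(0) ≥ ∫_0^∞ e^{-ρs}g(s) ds`. -/
theorem stmt_15 (ρ : ℝ) (hρ : 0 < ρ) (g φ : ℝ → ℝ)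
    (hg : IntegrableOn (fun s => Real.exp (-ρ * s) * g s) (Ici 0))
    (hφ : ∀ r ≥ (0:ℝ), ∃ d : ℝ,
      HasDerivAt (fun r => Real.exp (-ρ * r) * φ r) d r ∧
      d ≤ -(Real.exp (-ρ * r) * g r))
    (htrans : (0 : EReal) ≤
      Filter.limsup (fun r => ((Real.exp (-ρ * r) * φ r : ℝ) : EReal)) atTop) :
    φ 0 ≥ ∫ s in Ici 0, Real.exp (-ρ * s) * g s :=
  stmt_15_general ρ g φ hg hφ htrans
end
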